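/- arXiv:1405.6616 — 3 statements merged into one kernel-verified Lean document; each statement's English description precedes it below -/
import Mathlib

section
/- Let G be a finite group and N a normal subgroup. If ρ is a complex representation of G/N whose inflation to G is a virtual permutation representation of G (i.e. an integer linear combination of permutation representations C[G/H]), then ρ is itself a virtual permutation representation of G/N. In other words, the inflation map induces an injection C(G/N) → C(G), where C(G) = R_Q(G)/Perm(G). -/
open scoped BigOperators
open Classical

/-- The permutation character of `G` acting on `G ⧸ H`. -/
noncomputable def permChar {G : Type} [Group G] [Fintype G] (H : Subgroup G) : G → ℂ :=
  fun g => (Fintype.card {x : G ⧸ H // g • x = x} : ℂ)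

/-- The additive group of virtual permutation characters of `G`. -/
noncomputable def PermRing (G : Type) [Group G] [Fintype G] : AddSubgroup (G → ℂ) :=
  AddSubgroup.closure { f | ∃ H : Subgroup G, f = permChar H }

/-!
Averaging over `N`, `χ ↦ (gN ↦ |N|⁻¹ ∑_{n ∈ N} χ(gn))`, is additive, fixes class functions
inflated from `G ⧸ N`, and sends the permutation character of `G ⧸ H` to that of
`(G ⧸ N) ⧸ (HN/N)`. Indeed the points of `(G ⧸ N) ⧸ (HN/N)` are the `N`-orbits on `G ⧸ H`, and by
orbit–stabilizer every `g`-stable `N`-orbit contributes exactly `|N|` fixed points to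
`∑_{n ∈ N} |Fix(gn)|`, while the other orbits contribute none. So averaging maps `Perm(G)` into
`Perm(G ⧸ N)`, and an inflated `f ∈ Perm(G)` is its own average.
-/

open MulAction Finset Function

theorem card_smul_eq_of_mem_orbit {M X : Type} [Group M] [Fintype M] [MulAction M X] {x z : X}
    (hz : z ∈ orbit M x) :
    Fintype.card {m : M // m • x = z} = Fintype.card (stabilizer M x) := by
  obtain ⟨m, rfl⟩ := hz
  refine Fintype.card_congr
    { toFun := fun n => ⟨m⁻¹ * n, by simp [mul_smul, n.2]⟩
      invFun := fun s => ⟨m * s, by simp [mul_smul, mem_stabilizer_iff.1 s.2]⟩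
      left_inv := fun n => by simp
      right_inv := fun s => by simp }

theorem sum_card_stabilizer_of_orbit {M X : Type} [Group M] [Fintype M] [MulAction M X] [Fintype X]
    (x₀ : X) :
    ∑ x ∈ (orbit M x₀).toFinset, Fintype.card (stabilizer M x) = Fintype.card M := by
  set F := (orbit M x₀).toFinset
  have hcard : ∀ x ∈ F, Fintype.card (stabilizer M x) * #F = Fintype.card M := by
    intro x hx
    rw [Set.toFinset_card, ← orbit_eq_iff.2 (Set.mem_toFinset.1 hx), mul_comm]
    exact card_orbit_mul_card_stabilizer_eq_card_group M x
  have hF : 0 < #F := Finset.card_pos.2 ⟨x₀, Set.mem_toFinset.2 (mem_orbit_self x₀)⟩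
  refine Nat.eq_of_mul_eq_mul_right hF ?_
  rw [Finset.sum_mul, Finset.sum_congr rfl hcard, Finset.sum_const, smul_eq_mul, mul_comm]

section FibredByOrbits

variable {G X Y Q : Type} [Group G] [MulAction G X] [Group Q] [MulAction Q Y]
  {N : Subgroup G} [Fintype N] {φ : G →* Q} {π : X → Y}

theorem card_mul_smul_eq_self (hsmul : ∀ g x, π (g • x) = φ g • π x)
    (hfib : ∀ x x', π x = π x' ↔ x ∈ orbit N x') (g : G) (x : X) :
    Fintype.card {n : N // (g * n) • x = x}
      = if φ g • π x = π x then Fintype.card (stabilizer N x) else 0 := by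
  have hiff : ∀ n : N, (g * n) • x = x ↔ n • x = g⁻¹ • x := fun n => by
    rw [mul_smul, ← eq_inv_smul_iff, Subgroup.smul_def]
  rw [Fintype.card_congr (Equiv.subtypeEquivRight hiff)]
  split_ifs with hfix
  · refine card_smul_eq_of_mem_orbit ((hfib _ _).1 ?_)
    rw [hsmul, map_inv, inv_smul_eq_iff, hfix]
  · refine Fintype.card_eq_zero_iff.2 ⟨fun ⟨n, hn⟩ => hfix ?_⟩
    have h : π x = φ g⁻¹ • π x := by rw [← hsmul, ← hn, (hfib _ _).2 (mem_orbit x n)]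
    rw [map_inv] at h
    exact eq_inv_smul_iff.1 h

theorem sum_card_mul_smul_eq_self [Fintype X] [Fintype Y] (hπ : Surjective π)
    (hsmul : ∀ g x, π (g • x) = φ g • π x)
    (hfib : ∀ x x', π x = π x' ↔ x ∈ orbit N x') (g : G) :
    ∑ n : N, Fintype.card {x : X // (g * n) • x = x}
      = Fintype.card {y : Y // φ g • y = y} * Fintype.card N := by
  have hfibre : ∀ y, (univ.filter fun x => π x = y) = (orbit N (π.surjInv hπ y)).toFinset := by
    intro y
    ext x
    simp [← hfib x, π.surjInv_eq hπ]
  calc ∑ n : N, Fintype.card {x : X // (g * n) • x = x}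
      = ∑ x : X, Fintype.card {n : N // (g * n) • x = x} := by
        simp only [Fintype.card_subtype, card_filter]
        exact Finset.sum_comm
    _ = ∑ y : Y, ∑ x ∈ univ.filter (fun x => π x = y),
          if φ g • y = y then Fintype.card (stabilizer N x) else 0 := by
        rw [← Finset.sum_fiberwise univ π]
        refine Finset.sum_congr rfl fun y _ => Finset.sum_congr rfl fun x hx => ?_
        rw [card_mul_smul_eq_self hsmul hfib, (Finset.mem_filter.1 hx).2]
    _ = ∑ y : Y, if φ g • y = y then Fintype.card N else 0 := by
        refine Finset.sum_congr rfl fun y _ => ?_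
        split_ifs
        · rw [hfibre, sum_card_stabilizer_of_orbit]
        · exact Finset.sum_const_zero
    _ = _ := by
        rw [← Finset.sum_filter, Finset.sum_const, smul_eq_mul, ← Fintype.card_subtype]

end FibredByOrbits

namespace QuotientGroup

variable {G : Type} [Group G] (N : Subgroup G) [N.Normal] (H : Subgroup G)

def mapQuotientMk : G ⧸ H → (G ⧸ N) ⧸ H.map (mk' N) :=
  Quotient.map' (mk' N) fun a b hab => by
    rw [leftRel_apply] at hab ⊢
    exact ⟨a⁻¹ * b, hab, by simp⟩

@[simp]
theorem mapQuotientMk_mk (a : G) :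
    mapQuotientMk N H (a : G ⧸ H) = ((a : G ⧸ N) : (G ⧸ N) ⧸ H.map (mk' N)) := rfl

theorem mapQuotientMk_smul (g : G) (x : G ⧸ H) :
    mapQuotientMk N H (g • x) = (g : G ⧸ N) • mapQuotientMk N H x := by
  induction x using QuotientGroup.induction_on
  rfl

theorem mapQuotientMk_eq_iff (x x' : G ⧸ H) :
    mapQuotientMk N H x = mapQuotientMk N H x' ↔ x ∈ orbit N x' := by
  induction x using QuotientGroup.induction_on with | H a =>
  induction x' using QuotientGroup.induction_on with | H b =>
  have hsup : a⁻¹ * b ∈ H ⊔ N ↔ b⁻¹ * a ∈ (↑(N ⊔ H) : Set G) := by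
    rw [sup_comm, ← inv_mem_iff (x := a⁻¹ * b), mul_inv_rev, inv_inv, SetLike.mem_coe]
  rw [mapQuotientMk_mk, mapQuotientMk_mk, QuotientGroup.eq, ← mk_inv, ← mk_mul, ← mk'_apply,
    ← Subgroup.mem_comap, Subgroup.comap_map_eq, ker_mk', hsup, Subgroup.normal_mul, Set.mem_mul]
  constructor
  · rintro ⟨m, hm, h, hh, hmh⟩
    refine ⟨⟨b * m * b⁻¹, Subgroup.Normal.conj_mem ‹_› m hm b⟩, ?_⟩
    show (b * m * b⁻¹ : G) • (b : G ⧸ H) = a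
    rw [Quotient.smul_mk, QuotientGroup.eq, smul_eq_mul]
    obtain rfl : h = m⁻¹ * (b⁻¹ * a) := by rw [← hmh]; group
    convert SetLike.mem_coe.1 hh using 1
    group
  · rintro ⟨⟨n, hn⟩, hnb⟩
    replace hnb : (n • b)⁻¹ * a ∈ H := QuotientGroup.eq.1 hnb
    refine ⟨b⁻¹ * n * b, by simpa using Subgroup.Normal.conj_mem ‹_› n hn b⁻¹, _, hnb, ?_⟩
    rw [smul_eq_mul]
    group

theorem mapQuotientMk_surjective : Function.Surjective (mapQuotientMk N H) := by
  intro y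
  induction y using QuotientGroup.induction_on with | H q =>
  induction q using QuotientGroup.induction_on with | H a =>
  exact ⟨a, rfl⟩

end QuotientGroup

open QuotientGroup

section Averaging

variable {G : Type} [Group G] (N : Subgroup G) [Fintype N]

noncomputable def cosetAverage : (G → ℂ) →+ (G ⧸ N → ℂ) where
  toFun χ q := (Fintype.card N : ℂ)⁻¹ * ∑ n : N, χ (q.out * n)
  map_zero' := by ext; simp
  map_add' _ _ := by ext; simp [Finset.sum_add_distrib, mul_add]

variable [N.Normal]

theorem sum_permChar_mul [Fintype G] (H : Subgroup G) (g : G) :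
    ∑ n : N, permChar H (g * n) = Fintype.card N * permChar (H.map (mk' N)) (g : G ⧸ N) := by
  have := sum_card_mul_smul_eq_self (φ := mk' N) (mapQuotientMk_surjective N H)
    (mapQuotientMk_smul N H) (mapQuotientMk_eq_iff N H) g
  -- `Nat.card` forgets the differing decidability instances behind the two `Fintype.card`s.
  simp only [permChar, ← Nat.card_eq_fintype_card] at this ⊢
  rw [mul_comm]
  exact_mod_cast this

theorem cosetAverage_permChar [Fintype G] (H : Subgroup G) :
    cosetAverage N (permChar H) = permChar (H.map (mk' N)) := by
  ext q
  rw [cosetAverage, AddMonoidHom.coe_mk, ZeroHom.coe_mk, sum_permChar_mul, out_eq', ← mul_assoc,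
    inv_mul_cancel₀ (by exact_mod_cast Fintype.card_ne_zero), one_mul]

theorem cosetAverage_comp_mk (f : G ⧸ N → ℂ) :
    cosetAverage N (fun g => f g) = f := by
  ext q
  have hmk : ∀ n : N, ((q.out * n : G) : G ⧸ N) = q := fun n => by
    rw [mk_mul, (eq_one_iff _).2 n.2, mul_one, out_eq']
  rw [cosetAverage, AddMonoidHom.coe_mk, ZeroHom.coe_mk]
  simp only [hmk, Finset.sum_const, Finset.card_univ, nsmul_eq_mul]
  rw [← mul_assoc, inv_mul_cancel₀ (by exact_mod_cast Fintype.card_ne_zero), one_mul]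

theorem map_cosetAverage_permRing_le [Fintype G] :
    (PermRing G).map (cosetAverage N) ≤ PermRing (G ⧸ N) := by
  rw [PermRing, AddMonoidHom.map_closure, AddSubgroup.closure_le]
  rintro _ ⟨_, ⟨H, rfl⟩, rfl⟩
  exact AddSubgroup.subset_closure ⟨H.map (mk' N), cosetAverage_permChar N H⟩

end Averaging

theorem inflation_injective_on_C_general (G : Type) [Group G] [Fintype G] (N : Subgroup G)
    [N.Normal] (f : G ⧸ N → ℂ)
    (hinfl : (fun g : G => f (QuotientGroup.mk g)) ∈ PermRing G) :
    f ∈ PermRing (G ⧸ N) := by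
  have h := map_cosetAverage_permRing_le N (AddSubgroup.mem_map_of_mem (cosetAverage N) hinfl)
  rwa [cosetAverage_comp_mk] at h

/-- Let `G` be a finite group and `N ⊴ G`.  If `ρ` is a complex representation of `G/N`
whose inflation to `G` is a virtual permutation representation of `G`, then `ρ` is itself
a virtual permutation representation of `G/N`; i.e. inflation induces an injection
`C(G/N) → C(G)`. -/
theorem inflation_injective_on_C (G : Type) [Group G] [Fintype G] (N : Subgroup G)
    [N.Normal] (f : G ⧸ N → ℂ) (hrep : ∃ V : FDRep ℂ (G ⧸ N), f = V.character)
    (hinfl : (fun g : G => f (QuotientGroup.mk g)) ∈ PermRing G) :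
    f ∈ PermRing (G ⧸ N) :=
  inflation_injective_on_C_general G N f hinfl
end

section
/- Let H₁, H₂ be subgroups of a finite group G, and let τᵢ be a complex character of Hᵢ (i = 1,2) with τ₁ rational-valued. Then ⟨Ind_{H₁}^G τ₁, Ind_{H₂}^G τ₂⟩ = (1/(|H₁||H₂|)) · Σ_{[C]} |N_G(C)| φ(|C|) · (Σ_{D₁ ≤ H₁, D₁ ~ C} τ₁(D₁)) · (Σ_{D₂ ≤ H₂, D₂ ~ C} tr*τ₂(D₂)), where the outer sum is over conjugacy classes of cyclic subgroups C of G, Dᵢ ~ C means Dᵢ is G-conjugate to C, τ₁(D₁) denotes the value of τ₁ on any generator of D₁ (well defined by rationality), and tr*τ₂(D₂) is the average value of τ₂ over the generators of D₂. -/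
/-!
Expanding both induced characters, and using that the induced character of `τ₂` is a
class function, the inner product becomes
`(|H₁||H₂|)⁻¹ Σ_u τ₁(u) · conj (Σ_z τ₂(z⁻¹uz))`, with `τᵢ` extended by zero to `G`.
Group the `u` by the cyclic subgroup `D₁ = ⟨u⟩`, and the `D₁` by their conjugacy class
`[C]`. As `τ₁` is rational-valued, `τ₁(u^k) = τ₁(u)` for `k` prime to the order of `u`
(the cyclotomic polynomial is irreducible over `ℚ`), so `τ₁` is constant on the
generators of `D₁`. For fixed `D₁`, the pairs `(u, z)` run over the generators of the
conjugates `z⁻¹D₁z`, every conjugate `D₂ ~ C` being hit `|N_G(C)|` times and contributing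
`φ(|C|) tr*τ₂(D₂)`, which is real since `τ₂(g⁻¹) = conj τ₂(g)`.
-/

open scoped BigOperators
open Classical

variable {G : Type} [Group G] [Fintype G]

/-- Inner product of class functions on a finite group. -/
noncomputable def innerChar (f₁ f₂ : G → ℂ) : ℂ :=
  (Fintype.card G : ℂ)⁻¹ * ∑ g : G, f₁ g * (starRingEnd ℂ) (f₂ g)

/-- The character of `G` induced from a character of a subgroup `K`. -/
noncomputable def indChar (K : Subgroup G) (χ : ↥K → ℂ) : G → ℂ :=
  fun g => (Fintype.card K : ℂ)⁻¹ *
    ∑ x : G, if h : x⁻¹ * g * x ∈ K then χ ⟨x⁻¹ * g * x, h⟩ else 0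

/-- Extension of a class function on a subgroup by zero. -/
noncomputable def extendChar (K : Subgroup G) (f : ↥K → ℂ) : G → ℂ :=
  fun g => if h : g ∈ K then f ⟨g, h⟩ else 0

/-- The average value of `f` over the generators of a (cyclic) subgroup `D`: this is
`tr* f (D)`, and for a rational-valued character it equals the common value `f(D)` of `f`
at any generator of `D`. -/
noncomputable def genAvg (f : G → ℂ) (D : Subgroup G) : ℂ :=
  ((Finset.univ.filter (fun x : ↥D => Subgroup.zpowers (x : G) = D)).card : ℂ)⁻¹ *
    ∑ x ∈ Finset.univ.filter (fun x : ↥D => Subgroup.zpowers (x : G) = D), f ↑x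

/-- The conjugate subgroup `g D g⁻¹`. -/
def conjSub (g : G) (D : Subgroup G) : Subgroup G :=
  Subgroup.map (MulAut.conj g).toMonoidHom D

/-- `D` is conjugate to `C` in `G`. -/
def IsConjSub (D C : Subgroup G) : Prop := ∃ g : G, conjSub g C = D

open ComplexConjugate

section Characters
open Polynomial Module

lemma Module.End.pow_apply_of_mem_eigenspace {R M : Type*} [CommRing R] [AddCommGroup M]
    [Module R M] {f : Module.End R M} {μ : R} {x : M} (hx : x ∈ f.eigenspace μ) (k : ℕ) :
    (f ^ k) x = μ ^ k • x := by
  rcases eq_or_ne x 0 with rfl | hx0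
  · simp
  · exact Module.End.HasEigenvector.pow_apply ⟨hx, hx0⟩ k

lemma Module.End.trace_pow_eq_sum_of_pow_eq_one {K W : Type*} [Field K] [IsAlgClosed K]
    [AddCommGroup W] [Module K W] [FiniteDimensional K W] {f : Module.End K W} {n : ℕ} [NeZero n]
    (hf : f ^ n = 1) {ζ : K} (hζ : IsPrimitiveRoot ζ n) (k : ℕ) :
    LinearMap.trace K W (f ^ k) =
      ∑ i : Fin n, (ζ ^ (i : ℕ)) ^ k * finrank K (f.eigenspace (ζ ^ (i : ℕ))) := by
  have : NeZero (n : K) := hζ.neZero'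
  have hss : f.IsSemisimple := Module.End.isSemisimple_of_squarefree_aeval_eq_zero
    ((X_pow_sub_one_separable_iff (n := n)).mpr (NeZero.ne _)).squarefree (by simp [hf])
  have hspan : ⨆ i : Fin n, f.eigenspace (ζ ^ (i : ℕ)) = ⊤ := by
    refine eq_top_iff.mpr (hss.iSup_eigenspace_eq_top.ge.trans (iSup_le fun μ => ?_))
    by_cases hμ : f.eigenspace μ = ⊥
    · simp [hμ]
    obtain ⟨v, hv⟩ := ((show f.HasEigenvalue μ from hμ).pow n).exists_hasEigenvector
    rw [hf] at hv
    have hμn : μ ^ n = 1 :=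
      smul_left_injective K hv.2 (by simpa [eq_comm] using hv.apply_eq_smul)
    obtain ⟨i, hi, rfl⟩ := hζ.eq_pow_of_pow_eq_one hμn
    exact le_iSup (fun i : Fin n => f.eigenspace (ζ ^ (i : ℕ))) ⟨i, hi⟩
  have hInt : DirectSum.IsInternal fun i : Fin n => f.eigenspace (ζ ^ (i : ℕ)) :=
    DirectSum.isInternal_submodule_of_iSupIndep_of_iSup_eq_top
      ((Module.End.independent_genEigenspace f 1).comp
        fun i j h => Fin.ext (hζ.pow_inj i.2 j.2 h)) hspan
  rw [LinearMap.trace_eq_sum_trace_restrict hInt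
    fun i => Module.End.mapsTo_genEigenspace_of_comm (Commute.self_pow f k) _ 1]
  refine Finset.sum_congr rfl fun i _ => ?_
  have hres : (f ^ k).restrict (Module.End.mapsTo_genEigenspace_of_comm (Commute.self_pow f k)
      (ζ ^ (i : ℕ)) 1) = (ζ ^ (i : ℕ)) ^ k • LinearMap.id := by
    ext x
    exact Module.End.pow_apply_of_mem_eigenspace x.2 k
  rw [hres, map_smul, LinearMap.trace_id, smul_eq_mul]

variable {H : Type} [Group H] [Finite H] (V : FDRep ℂ H)

lemma FDRep.exists_polynomial_character_pow (g : H) {ζ : ℂ}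
    (hζ : IsPrimitiveRoot ζ (orderOf g)) :
    ∃ P : ℚ[X], ∀ k : ℕ, V.character (g ^ k) = aeval (ζ ^ k) P := by
  have : NeZero (orderOf g) := ⟨(orderOf_pos g).ne'⟩
  have hg : (V.ρ g : Module.End ℂ V) ^ orderOf g = 1 := by
    rw [← map_pow, pow_orderOf_eq_one, map_one]
  refine ⟨∑ i : Fin (orderOf g),
      C (finrank ℂ (Module.End.eigenspace (V.ρ g) (ζ ^ (i : ℕ))) : ℚ) * X ^ (i : ℕ),
    fun k => ?_⟩
  rw [FDRep.character, map_pow, Module.End.trace_pow_eq_sum_of_pow_eq_one hg hζ k]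
  simp only [map_sum, map_mul, aeval_C, map_pow, aeval_X, eq_ratCast, Rat.cast_natCast]
  exact Finset.sum_congr rfl fun i _ => by rw [← pow_mul, ← pow_mul, mul_comm, mul_comm k]

lemma FDRep.character_pow_eq_of_coprime {g : H} {q : ℚ} (hq : V.character g = q) {k : ℕ}
    (hk : k.Coprime (orderOf g)) : V.character (g ^ k) = V.character g := by
  have hn := orderOf_pos g
  obtain ⟨ζ, hζ⟩ : ∃ ζ : ℂ, IsPrimitiveRoot ζ (orderOf g) :=
    ⟨_, Complex.isPrimitiveRoot_exp _ hn.ne'⟩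
  obtain ⟨P, hP⟩ := V.exists_polynomial_character_pow g hζ
  have hPζ : aeval ζ (P - C q) = 0 := by
    rw [map_sub, aeval_C, ← pow_one ζ, ← hP 1, pow_one, hq, eq_ratCast, sub_self]
  -- the minimal polynomial of `ζ` over `ℚ` is cyclotomic, so it also vanishes at `ζ ^ k`
  obtain ⟨r, hr⟩ := minpoly.dvd ℚ ζ hPζ
  have hPζk : aeval (ζ ^ k) (P - C q) = 0 := by
    rw [hr, map_mul, ← cyclotomic_eq_minpoly_rat hζ hn, aeval_def, eval₂_eq_eval_map,
      map_cyclotomic, ((hζ.pow_of_coprime k hk).isRoot_cyclotomic hn).eq_zero, zero_mul]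
  rw [map_sub, aeval_C, eq_ratCast, sub_eq_zero, ← hP k, ← hq] at hPζk
  exact hPζk

lemma FDRep.character_inv (g : H) : V.character g⁻¹ = conj (V.character g) := by
  have hn := orderOf_pos g
  obtain ⟨ζ, hζ⟩ : ∃ ζ : ℂ, IsPrimitiveRoot ζ (orderOf g) :=
    ⟨_, Complex.isPrimitiveRoot_exp _ hn.ne'⟩
  obtain ⟨P, hP⟩ := V.exists_polynomial_character_pow g hζ
  have hg : g⁻¹ = g ^ (orderOf g - 1) := by
    rw [pow_sub _ hn, pow_orderOf_eq_one, one_mul, pow_one]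
  have hζ_star : ζ ^ (orderOf g - 1) = conj ζ := by
    rw [pow_sub₀ _ (hζ.ne_zero hn.ne') hn, hζ.pow_eq_one, one_mul, pow_one,
      Complex.inv_eq_conj (hζ.norm'_eq_one hn.ne')]
  calc V.character g⁻¹ = aeval (conj ζ) P := by rw [hg, hP, hζ_star]
    _ = conj (aeval ζ P) := aeval_algHom_apply (starRingEnd ℂ).toRatAlgHom ζ P
    _ = conj (V.character g) := by rw [← pow_one ζ, ← hP 1, pow_one]

end Characters

section ConjugateSubgroups
open Pointwise
omit [Fintype G]

lemma conjSub_eq_smul (g : G) (D : Subgroup G) : conjSub g D = ConjAct.toConjAct g • D := rfl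

lemma conjSub_mul (g h : G) (D : Subgroup G) : conjSub (g * h) D = conjSub g (conjSub h D) := by
  simp only [conjSub_eq_smul, map_mul, mul_smul]

lemma conjSub_one (D : Subgroup G) : conjSub 1 D = D := by
  rw [conjSub_eq_smul, map_one, one_smul]

lemma conjSub_eq_self_iff {g : G} {D : Subgroup G} :
    conjSub g D = D ↔ g ∈ Subgroup.normalizer (D : Set G) :=
  Subgroup.conjAct_pointwise_smul_iff

lemma natCard_conjSub (g : G) (D : Subgroup G) : Nat.card (conjSub g D) = Nat.card D :=
  Subgroup.card_map_of_injective (MulAut.conj g).injective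

lemma conjSub_zpowers (g x : G) :
    conjSub g (Subgroup.zpowers x) = Subgroup.zpowers (g * x * g⁻¹) :=
  MonoidHom.map_zpowers _ x

lemma IsConjSub.natCard_eq {D C : Subgroup G} (h : IsConjSub D C) : Nat.card D = Nat.card C := by
  obtain ⟨g, rfl⟩ := h
  exact natCard_conjSub g C

lemma IsConjSub.isCyclic {D C : Subgroup G} (h : IsConjSub D C) [IsCyclic C] : IsCyclic D := by
  obtain ⟨g, rfl⟩ := h
  exact isCyclic_of_surjective _
    (Subgroup.equivMapOfInjective C _ (MulAut.conj g).injective).surjective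

lemma IsConjSub.conjSub {D C : Subgroup G} (h : IsConjSub D C) (g : G) :
    IsConjSub (conjSub g D) C := by
  obtain ⟨a, rfl⟩ := h
  exact ⟨g * a, conjSub_mul g a C⟩

end ConjugateSubgroups

section Generators

noncomputable def generators (D : Subgroup G) : Finset G :=
  Finset.univ.filter fun v : G => Subgroup.zpowers v = D

lemma mem_generators {D : Subgroup G} {v : G} : v ∈ generators D ↔ Subgroup.zpowers v = D := by
  simp [generators]

lemma isCyclic_of_mem_generators {D : Subgroup G} {v : G} (hv : v ∈ generators D) :
    IsCyclic D :=
  mem_generators.mp hv ▸ Subgroup.isCyclic_zpowers v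

lemma map_subtype_filter_eq_generators (D : Subgroup G) :
    (Finset.univ.filter fun x : D => Subgroup.zpowers (x : G) = D).map
      (Function.Embedding.subtype _) = generators D := by
  ext v
  simp only [Finset.mem_map, Finset.mem_filter, Finset.mem_univ, true_and,
    Function.Embedding.coe_subtype, mem_generators]
  exact ⟨by rintro ⟨x, hx, rfl⟩; exact hx,
    fun hv => ⟨⟨v, hv ▸ Subgroup.mem_zpowers v⟩, hv, rfl⟩⟩

lemma genAvg_eq (f : G → ℂ) (D : Subgroup G) :
    genAvg f D = ((generators D).card : ℂ)⁻¹ * ∑ v ∈ generators D, f v := by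
  rw [genAvg, ← map_subtype_filter_eq_generators, Finset.card_map, Finset.sum_map]
  rfl

lemma sum_generators_eq_card_mul_genAvg (f : G → ℂ) (D : Subgroup G) :
    ∑ v ∈ generators D, f v = (generators D).card * genAvg f D := by
  rcases (generators D).eq_empty_or_nonempty with h | h
  · simp [h]
  · rw [genAvg_eq, mul_inv_cancel_left₀ (Nat.cast_ne_zero.mpr h.card_pos.ne')]

lemma card_generators (D : Subgroup G) [IsCyclic D] :
    (generators D).card = Nat.totient (Nat.card D) := by
  rw [← map_subtype_filter_eq_generators, Finset.card_map, Nat.card_eq_fintype_card,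
    ← IsCyclic.card_orderOf_eq_totient dvd_rfl]
  congr 1
  refine Finset.filter_congr fun x _ => ?_
  rw [← Subgroup.orderOf_coe, ← Nat.card_zpowers, ← Nat.card_eq_fintype_card]
  exact ⟨fun h => by rw [h],
    fun h => Subgroup.eq_of_le_of_card_ge (Subgroup.zpowers_le.mpr x.2) h.ge⟩

lemma generators_conjSub (g : G) (D : Subgroup G) :
    generators (conjSub g D) = (generators D).map (MulAut.conj g).toEquiv.toEmbedding := by
  ext v
  simp only [Finset.mem_map, mem_generators, Equiv.coe_toEmbedding, MulEquiv.toEquiv_eq_coe,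
    MulEquiv.coe_toEquiv, MulAut.conj_apply]
  constructor
  · intro hv
    refine ⟨g⁻¹ * v * g, ?_, by group⟩
    have := conjSub_zpowers g⁻¹ v
    rw [inv_inv, hv, ← conjSub_mul, inv_mul_cancel, conjSub_one] at this
    exact this.symm
  · rintro ⟨u, rfl, rfl⟩
    exact (conjSub_zpowers g u).symm

lemma sum_eq_sum_sum_generators {M : Type*} [AddCommMonoid M] (f : G → M) :
    ∑ u, f u = ∑ D : Subgroup G, ∑ u ∈ generators D, f u :=
  (Finset.sum_fiberwise Finset.univ (fun u => Subgroup.zpowers u) f).symm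

end Generators

lemma exists_coprime_pow_eq_of_zpowers_eq {u v : G}
    (h : Subgroup.zpowers u = Subgroup.zpowers v) :
    ∃ k : ℕ, k.Coprime (orderOf u) ∧ u ^ k = v := by
  obtain ⟨k, rfl⟩ := (isOfFinOrder_of_finite u).mem_powers_iff_mem_zpowers.mpr
    (h ▸ Subgroup.mem_zpowers v)
  refine ⟨k, Nat.coprime_comm.mp ?_, rfl⟩
  have hord : orderOf u / (orderOf u).gcd k = orderOf u := by
    rw [← orderOf_pow, ← Nat.card_zpowers, ← h, Nat.card_zpowers]
  exact (Nat.div_eq_self.mp hord).resolve_left (orderOf_pos u).ne'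

section ExtendedCharacters

variable {K : Subgroup G}

omit [Fintype G] in
lemma extendChar_of_mem (τ : K → ℂ) {v : G} (hv : v ∈ K) :
    extendChar K τ v = τ ⟨v, hv⟩ :=
  dif_pos hv

omit [Fintype G] in
lemma extendChar_of_notMem (τ : K → ℂ) {v : G} (hv : v ∉ K) : extendChar K τ v = 0 :=
  dif_neg hv

lemma genAvg_extendChar_of_not_le (τ : K → ℂ) {D : Subgroup G} (hD : ¬D ≤ K) :
    genAvg (extendChar K τ) D = 0 := by
  rw [genAvg_eq, Finset.sum_eq_zero, mul_zero]
  intro v hv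
  exact extendChar_of_notMem τ fun hvK => hD (mem_generators.mp hv ▸ Subgroup.zpowers_le.mpr hvK)

lemma extendChar_eq_of_zpowers_eq {τ : K → ℂ} {V : FDRep ℂ K} (hV : τ = V.character)
    (hτQ : ∀ x, ∃ q : ℚ, τ x = q) {u v : G}
    (huv : Subgroup.zpowers u = Subgroup.zpowers v) :
    extendChar K τ v = extendChar K τ u := by
  by_cases hu : u ∈ K
  · obtain ⟨k, hk, rfl⟩ := exists_coprime_pow_eq_of_zpowers_eq huv
    obtain ⟨q, hq⟩ := hτQ ⟨u, hu⟩
    rw [extendChar_of_mem τ hu, extendChar_of_mem τ (pow_mem hu k), hV]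
    rw [hV] at hq
    rw [← Subgroup.orderOf_mk u hu] at hk
    exact V.character_pow_eq_of_coprime hq hk
  · have hv : v ∉ K := fun hv => hu (Subgroup.zpowers_le.mpr hv (huv ▸ Subgroup.mem_zpowers u))
    rw [extendChar_of_notMem τ hu, extendChar_of_notMem τ hv]

lemma extendChar_eq_genAvg_of_mem_generators {τ : K → ℂ} {V : FDRep ℂ K}
    (hV : τ = V.character) (hτQ : ∀ x, ∃ q : ℚ, τ x = q) {D : Subgroup G} {u : G}
    (hu : u ∈ generators D) : extendChar K τ u = genAvg (extendChar K τ) D := by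
  have hconst : ∀ v ∈ generators D, extendChar K τ v = extendChar K τ u := fun v hv =>
    extendChar_eq_of_zpowers_eq hV hτQ ((mem_generators.mp hu).trans (mem_generators.mp hv).symm)
  rw [genAvg_eq, Finset.sum_congr rfl hconst, Finset.sum_const, nsmul_eq_mul,
    inv_mul_cancel_left₀ (Nat.cast_ne_zero.mpr (Finset.card_ne_zero_of_mem hu))]

lemma conj_extendChar {τ : K → ℂ} {V : FDRep ℂ K} (hV : τ = V.character) (v : G) :
    conj (extendChar K τ v) = extendChar K τ v⁻¹ := by
  by_cases hv : v ∈ K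
  · rw [extendChar_of_mem τ hv, extendChar_of_mem τ (inv_mem hv), hV]
    exact (V.character_inv ⟨v, hv⟩).symm
  · rw [extendChar_of_notMem τ hv, extendChar_of_notMem τ (by rwa [inv_mem_iff]), map_zero]

lemma conj_genAvg_extendChar {τ : K → ℂ} {V : FDRep ℂ K} (hV : τ = V.character)
    (D : Subgroup G) : conj (genAvg (extendChar K τ) D) = genAvg (extendChar K τ) D := by
  rw [genAvg_eq, map_mul, map_inv₀, map_natCast, map_sum]
  congr 1
  refine Finset.sum_equiv (Equiv.inv G) (fun v => ?_) fun v _ => conj_extendChar hV v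
  simp only [mem_generators, Equiv.inv_apply, Subgroup.zpowers_inv]

lemma finsum_genAvg_extendChar_eq_sum (τ : K → ℂ) (C : Subgroup G) :
    ∑ᶠ D ∈ {D : Subgroup G | D ≤ K ∧ IsConjSub D C}, genAvg (extendChar K τ) D =
      ∑ D ∈ Finset.univ.filter (IsConjSub · C), genAvg (extendChar K τ) D := by
  rw [finsum_mem_eq_toFinset_sum, Set.toFinset_ofPred, Finset.sum_filter, Finset.sum_filter]
  refine Finset.sum_congr rfl fun D _ => ?_
  by_cases hD : D ≤ K
  · simp only [hD, true_and]
  · simp only [hD, false_and, genAvg_extendChar_of_not_le τ hD, ite_self]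

end ExtendedCharacters

section Orbits
open Pointwise

lemma card_filter_conjSub_eq_card_normalizer {C D₁ D₂ : Subgroup G} (h₁ : IsConjSub D₁ C)
    (h₂ : IsConjSub D₂ C) :
    (Finset.univ.filter fun z : G => conjSub z D₁ = D₂).card =
      Nat.card (Subgroup.normalizer (C : Set G)) := by
  obtain ⟨a, rfl⟩ := h₁
  obtain ⟨b, rfl⟩ := h₂
  have hiff : ∀ z : G, conjSub z (conjSub a C) = conjSub b C ↔
      b⁻¹ * z * a ∈ Subgroup.normalizer (C : Set G) := fun z => by
    rw [← conjSub_eq_self_iff, conjSub_mul, conjSub_mul, conjSub_eq_smul b⁻¹, map_inv,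
      inv_smul_eq_iff, ← conjSub_eq_smul]
  rw [← Fintype.card_subtype, Nat.card_eq_fintype_card]
  exact Fintype.card_congr
    (((Equiv.mulLeft b⁻¹).trans (Equiv.mulRight a)).subtypeEquiv hiff)

lemma sum_conjSub_eq_card_normalizer_smul {M : Type*} [AddCommMonoid M] (h : Subgroup G → M)
    {C D : Subgroup G} (hD : IsConjSub D C) :
    ∑ z : G, h (conjSub z D) = Nat.card (Subgroup.normalizer (C : Set G)) •
      ∑ D' ∈ Finset.univ.filter (IsConjSub · C), h D' := by
  rw [← Finset.sum_fiberwise_of_maps_to (g := fun z => conjSub z D)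
    (t := Finset.univ.filter (IsConjSub · C)) fun z _ => by simpa using hD.conjSub z,
    Finset.smul_sum]
  refine Finset.sum_congr rfl fun D' hD' => ?_
  rw [Finset.sum_congr rfl fun z hz => congrArg h (Finset.mem_filter.mp hz).2, Finset.sum_const,
    card_filter_conjSub_eq_card_normalizer hD (Finset.mem_filter.mp hD').2]

lemma sum_eq_sum_sum_isConjSub {M : Type*} [AddCommMonoid M] (T : Finset (Subgroup G))
    (hTrep : ∀ C : Subgroup G, IsCyclic C → ∃! D, D ∈ T ∧ IsConjSub C D)
    (h : Subgroup G → M) (hcyc : ∀ D : Subgroup G, ¬IsCyclic D → h D = 0) :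
    ∑ D : Subgroup G, h D = ∑ C ∈ T, ∑ D ∈ Finset.univ.filter (IsConjSub · C), h D := by
  simp_rw [Finset.sum_filter]
  rw [Finset.sum_comm]
  refine Finset.sum_congr rfl fun D _ => ?_
  by_cases hD : IsCyclic D
  · obtain ⟨C, ⟨hCT, hDC⟩, hC⟩ := hTrep D hD
    rw [Finset.sum_eq_single_of_mem C hCT
      fun C' hC' hC'C => if_neg fun hDC' => hC'C (hC C' ⟨hC', hDC'⟩), if_pos hDC]
  · simp [hcyc D hD]

lemma sum_generators_sum_conj (f : G → ℂ) {C D : Subgroup G} [IsCyclic C] (hD : IsConjSub D C) :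
    ∑ u ∈ generators D, ∑ z : G, f (z⁻¹ * u * z) =
      (Nat.card (Subgroup.normalizer (C : Set G)) * Nat.totient (Nat.card C) : ℕ) *
        ∑ D' ∈ Finset.univ.filter (IsConjSub · C), genAvg f D' := by
  have hcard : ∀ z : G, ((generators (conjSub z D)).card : ℂ) = Nat.totient (Nat.card C) := by
    intro z
    have := (hD.conjSub z).isCyclic
    rw [card_generators, natCard_conjSub, hD.natCard_eq]
  calc ∑ u ∈ generators D, ∑ z : G, f (z⁻¹ * u * z)
      = ∑ z : G, ∑ v ∈ generators (conjSub z⁻¹ D), f v := by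
        rw [Finset.sum_comm]
        simp only [generators_conjSub, map_inv, MulEquiv.toEquiv_eq_coe, Finset.sum_map,
          Function.Embedding.coeFn_mk, EquivLike.coe_coe, MulAut.inv_apply, MulAut.conj_symm_apply]
    _ = ∑ z : G, Nat.totient (Nat.card C) * genAvg f (conjSub z D) := by
        rw [← Equiv.sum_comp (Equiv.inv G)]
        simp only [Equiv.inv_apply, inv_inv, sum_generators_eq_card_mul_genAvg, hcard]
    _ = _ := by
        rw [← Finset.mul_sum, sum_conjSub_eq_card_normalizer_smul _ hD, nsmul_eq_mul]
        push_cast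
        ring

end Orbits

section InducedCharacters

lemma sum_sum_conj_mul_eq_card_smul {R : Type*} [CommSemiring R] (f ψ : G → R)
    (hψ : ∀ x g : G, ψ (x * g * x⁻¹) = ψ g) :
    ∑ g : G, (∑ x : G, f (x⁻¹ * g * x)) * ψ g =
      Fintype.card G • ∑ u : G, f u * ψ u := by
  simp_rw [Finset.sum_mul]
  rw [Finset.sum_comm, ← Finset.card_univ, ← Finset.sum_const]
  refine Finset.sum_congr rfl fun x _ => ?_
  refine Fintype.sum_equiv ((Equiv.mulLeft x⁻¹).trans (Equiv.mulRight x)) _ _ fun g => ?_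
  simp only [Equiv.trans_apply, Equiv.coe_mulLeft, Equiv.coe_mulRight]
  rw [← hψ x (x⁻¹ * g * x)]
  group

lemma sum_conj_apply_conj (f : G → ℂ) (x g : G) :
    ∑ z : G, f (z⁻¹ * (x * g * x⁻¹) * z) = ∑ z : G, f (z⁻¹ * g * z) :=
  Fintype.sum_equiv (Equiv.mulLeft x⁻¹) _ _ fun z => by simp only [Equiv.coe_mulLeft]; group

lemma innerChar_indChar (H₁ H₂ : Subgroup G) (τ₁ : H₁ → ℂ) (τ₂ : H₂ → ℂ) :
    innerChar (indChar H₁ τ₁) (indChar H₂ τ₂) =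
      ((Fintype.card H₁ : ℂ) * Fintype.card H₂)⁻¹ *
        ∑ u : G, extendChar H₁ τ₁ u * conj (∑ z : G, extendChar H₂ τ₂ (z⁻¹ * u * z)) := by
  have hind : ∀ (K : Subgroup G) (τ : K → ℂ) (g : G),
      indChar K τ g = (Fintype.card K : ℂ)⁻¹ * ∑ x : G, extendChar K τ (x⁻¹ * g * x) :=
    fun _ _ _ => rfl
  simp only [innerChar, hind, map_mul, map_inv₀, map_natCast, mul_mul_mul_comm,
    ← Finset.mul_sum]
  rw [sum_sum_conj_mul_eq_card_smul _ _ fun x g => by rw [sum_conj_apply_conj], nsmul_eq_mul]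
  field_simp

end InducedCharacters

/-- **The induction inner product formula.**  Let `H₁, H₂ ≤ G`, `τᵢ` a complex character
of `Hᵢ` with `τ₁` rational-valued, and `T` a set of representatives of the conjugacy
classes of cyclic subgroups of `G`.  Then
`⟨Ind τ₁, Ind τ₂⟩ = (|H₁||H₂|)⁻¹ Σ_{[C]} |N_G(C)| φ(|C|) (Σ_{D₁≤H₁, D₁~C} τ₁(D₁))
(Σ_{D₂≤H₂, D₂~C} tr*τ₂(D₂))`, where `τ₁(D₁)` (the value of `τ₁` at any generator of
`D₁`, well defined by rationality) is expressed as the average of `τ₁` over the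
generators of `D₁`. -/
theorem inner_product_of_induced_characters
    (H₁ H₂ : Subgroup G) (τ₁ : ↥H₁ → ℂ) (τ₂ : ↥H₂ → ℂ)
    (hτ₁ : ∃ V : FDRep ℂ ↥H₁, τ₁ = V.character)
    (hτ₁Q : ∀ x, ∃ q : ℚ, τ₁ x = (q : ℂ))
    (hτ₂ : ∃ V : FDRep ℂ ↥H₂, τ₂ = V.character)
    (T : Finset (Subgroup G)) (hTcyc : ∀ D ∈ T, IsCyclic D)
    (hTrep : ∀ C : Subgroup G, IsCyclic C → ∃! D, D ∈ T ∧ IsConjSub C D) :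
    innerChar (indChar H₁ τ₁) (indChar H₂ τ₂) =
      ((Fintype.card H₁ : ℂ) * (Fintype.card H₂ : ℂ))⁻¹ *
        ∑ Cs ∈ T, (Nat.card (Subgroup.normalizer (Cs : Set G)) : ℂ) * (Nat.totient (Nat.card Cs) : ℂ) *
          (∑ᶠ D₁ ∈ {D : Subgroup G | D ≤ H₁ ∧ IsConjSub D Cs},
            genAvg (extendChar H₁ τ₁) D₁) *
          (∑ᶠ D₂ ∈ {D : Subgroup G | D ≤ H₂ ∧ IsConjSub D Cs},
            genAvg (extendChar H₂ τ₂) D₂) := by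
  obtain ⟨V₁, hV₁⟩ := hτ₁
  obtain ⟨V₂, hV₂⟩ := hτ₂
  have hcontribution : ∀ C ∈ T, ∀ D ∈ Finset.univ.filter (IsConjSub · C),
      ∑ u ∈ generators D,
          extendChar H₁ τ₁ u * conj (∑ z : G, extendChar H₂ τ₂ (z⁻¹ * u * z)) =
        genAvg (extendChar H₁ τ₁) D *
          ((Nat.card (Subgroup.normalizer (C : Set G)) * Nat.totient (Nat.card C) : ℕ) *
            ∑ D₂ ∈ Finset.univ.filter (IsConjSub · C), genAvg (extendChar H₂ τ₂) D₂) := by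
    intro C hC D hD
    have := hTcyc C hC
    have hconst : ∀ u ∈ generators D, extendChar H₁ τ₁ u = genAvg (extendChar H₁ τ₁) D :=
      fun u hu => extendChar_eq_genAvg_of_mem_generators hV₁ hτ₁Q hu
    rw [Finset.sum_congr rfl fun u hu => by rw [hconst u hu], ← Finset.mul_sum, ← map_sum,
      sum_generators_sum_conj _ (Finset.mem_filter.mp hD).2, map_mul, map_natCast, map_sum]
    simp only [conj_genAvg_extendChar hV₂]
  rw [innerChar_indChar, sum_eq_sum_sum_generators, sum_eq_sum_sum_isConjSub T hTrep _
    fun D hD => Finset.sum_eq_zero fun u hu => (hD (isCyclic_of_mem_generators hu)).elim]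
  congr 1
  refine Finset.sum_congr rfl fun C hC => ?_
  rw [Finset.sum_congr rfl (hcontribution C hC), finsum_genAvg_extendChar_eq_sum,
    finsum_genAvg_extendChar_eq_sum, ← Finset.sum_mul]
  push_cast
  ring
end

section
/- Let p be a prime with p ≡ 1 (mod 4), q = p^k, and N = ord_2(q−1) + 1. Let α ∈ F_q* have exact order 2^{N−1}, let c be the diagonal matrix diag(α, α^{-1}) and h = [[0,1],[−1,0]] in SL_2(F_q). Then S = ⟨c, h⟩ is a Sylow 2-subgroup of SL_2(F_q) and is isomorphic to the generalized quaternion group Q_{2^N}. -/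
/-!
As `α` has order `2 ^ (N - 1)`, `α ^ 2 ^ (N - 2) = -1`, so `c` and `h` satisfy the defining
relations `c ^ 2 ^ (N - 1) = 1`, `h ^ 2 = c ^ 2 ^ (N - 2)`, `c h = h c⁻¹` of `Q_{2^N}`.
The resulting map `Q_{2^N} → ⟨c, h⟩` is injective because `c` has order exactly
`2 ^ (N - 1)` and `h` is not diagonal, so `|⟨c, h⟩| = 2 ^ N`. As `q` is odd and
`q + 1 ≡ 2 mod 4`, this is the full power of `2` dividing `|SL₂(F_q)| = q (q - 1) (q + 1)`.
-/

open Matrix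

lemma Nat.factorization_mul_pred_mul_succ_two {q : ℕ} (hq : q % 4 = 1) (hq1 : 1 < q) :
    (q * (q - 1) * (q + 1)).factorization 2 = (q - 1).factorization 2 + 1 := by
  have hsucc : q + 1 = 2 * ((q + 1) / 2) := by omega
  rw [Nat.factorization_mul (Nat.mul_ne_zero (by omega) (by omega)) (by omega),
    Nat.factorization_mul (by omega) (by omega), hsucc,
    Nat.factorization_mul two_ne_zero (by omega)]
  simp only [Finsupp.add_apply, Nat.prime_two.factorization_self]
  rw [Nat.factorization_eq_zero_of_not_dvd (by omega),
    Nat.factorization_eq_zero_of_not_dvd (p := 2) (n := (q + 1) / 2) (by omega)]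
  ring

lemma Units.pow_two_pow_eq_neg_one {R : Type*} [Ring R] [NoZeroDivisors R] {u : Rˣ} {m : ℕ}
    (hu : orderOf u = 2 ^ (m + 1)) : u ^ 2 ^ m = -1 := by
  have hsq : ((u ^ 2 ^ m : Rˣ) : R) ^ 2 = 1 := by
    rw [← Units.val_pow_eq_pow_val, ← pow_mul, ← pow_succ, ← hu, pow_orderOf_eq_one,
      Units.val_one]
  have hne : u ^ 2 ^ m ≠ 1 :=
    pow_ne_one_of_lt_orderOf (by positivity) (hu ▸ Nat.pow_lt_pow_right one_lt_two m.lt_succ_self)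
  obtain h | h := sq_eq_one_iff.mp hsq
  · exact absurd (Units.ext h) hne
  · exact Units.ext h

section PowVal

variable {G : Type*} [Group G] {m : ℕ} [NeZero m] {c : G}

lemma pow_val_add_of_pow_eq_one (hc : c ^ m = 1) (i j : ZMod m) :
    c ^ (i + j).val = c ^ i.val * c ^ j.val := by
  rw [ZMod.val_add, ← pow_eq_pow_mod _ hc, pow_add]

lemma pow_val_sub_of_pow_eq_one (hc : c ^ m = 1) (i j : ZMod m) :
    c ^ (j - i).val = (c ^ i.val)⁻¹ * c ^ j.val := by
  rw [eq_inv_mul_iff_mul_eq, ← pow_val_add_of_pow_eq_one hc, add_sub_cancel]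

end PowVal

namespace QuaternionGroup

variable {G : Type*} [Group G] {n : ℕ} [NeZero n] {c h : G}

def lift (hc : c ^ (2 * n) = 1) (hh : h * h = c ^ n) (hch : c * h = h * c⁻¹) :
    QuaternionGroup n →* G where
  toFun
    | a i => c ^ i.val
    | xa i => h * c ^ i.val
  map_one' := by
    show c ^ (0 : ZMod (2 * n)).val = 1
    rw [ZMod.val_zero, pow_zero]
  map_mul' x y := by
    have hsemi (k : ℕ) : c ^ k * h = h * (c ^ k)⁻¹ := by
      rw [← inv_pow]
      exact ((show SemiconjBy h c⁻¹ c from hch.symm).pow_right k).eq.symm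
    rcases x with i | i <;> rcases y with j | j
    · exact pow_val_add_of_pow_eq_one hc i j
    · show h * c ^ (j - i).val = c ^ i.val * (h * c ^ j.val)
      rw [← mul_assoc, hsemi, mul_assoc, pow_val_sub_of_pow_eq_one hc]
    · show h * c ^ (i + j).val = h * c ^ i.val * c ^ j.val
      rw [mul_assoc, pow_val_add_of_pow_eq_one hc]
    · show c ^ ((n : ZMod (2 * n)) + j - i).val = h * c ^ i.val * (h * c ^ j.val)
      have hn : (n : ZMod (2 * n)).val = n :=
        ZMod.val_natCast_of_lt (by have := NeZero.pos n; omega)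
      rw [add_sub_assoc, pow_val_add_of_pow_eq_one hc, pow_val_sub_of_pow_eq_one hc, hn, ← hh,
        mul_assoc h (c ^ i.val), ← mul_assoc _ h, hsemi]
      group

variable (hc : c ^ (2 * n) = 1) (hh : h * h = c ^ n) (hch : c * h = h * c⁻¹)

@[simp]
lemma lift_a (i : ZMod (2 * n)) : lift hc hh hch (a i) = c ^ i.val := rfl

@[simp]
lemma lift_xa (i : ZMod (2 * n)) : lift hc hh hch (xa i) = h * c ^ i.val := rfl

lemma range_lift : (lift hc hh hch).range = Subgroup.closure {c, h} := by
  have hc_mem : c ∈ Subgroup.closure {c, h} := Subgroup.subset_closure (by simp)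
  have hh_mem : h ∈ Subgroup.closure {c, h} := Subgroup.subset_closure (by simp)
  apply le_antisymm
  · rintro _ ⟨i | i, rfl⟩
    · exact Subgroup.pow_mem _ hc_mem _
    · exact Subgroup.mul_mem _ hh_mem (Subgroup.pow_mem _ hc_mem _)
  · rw [Subgroup.closure_le, Set.insert_subset_iff, Set.singleton_subset_iff]
    refine ⟨⟨a 1, ?_⟩, ⟨xa 0, ?_⟩⟩
    · have := NeZero.pos n
      rw [lift_a, ZMod.val_one_eq_one_mod, Nat.mod_eq_of_lt (by omega), pow_one]
    · simp

lemma lift_injective (horder : orderOf c = 2 * n) (hh_not_mem : h ∉ Subgroup.zpowers c) :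
    Function.Injective (lift hc hh hch) := by
  rw [injective_iff_map_eq_one]
  rintro (i | i) hi
  · rw [lift_a, ← orderOf_dvd_iff_pow_eq_one, horder] at hi
    rw [Nat.eq_zero_of_dvd_of_lt hi (ZMod.val_lt i) |> (ZMod.val_eq_zero i).mp, one_def]
  · rw [lift_xa, mul_eq_one_iff_eq_inv] at hi
    exact absurd (hi ▸ Subgroup.inv_mem _ (Subgroup.npow_mem_zpowers c i.val)) hh_not_mem

noncomputable def closureEquiv (horder : orderOf c = 2 * n)
    (hh_not_mem : h ∉ Subgroup.zpowers c) : Subgroup.closure {c, h} ≃* QuaternionGroup n :=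
  (MulEquiv.subgroupCongr (range_lift hc hh hch).symm).trans
    (MonoidHom.ofInjective (lift_injective hc hh hch horder hh_not_mem)).symm

end QuaternionGroup

namespace Matrix.SpecialLinearGroup

section FinTwo

variable {R : Type*} [CommRing R]

def diagUnits : Rˣ →* SpecialLinearGroup (Fin 2) R where
  toFun u := ⟨!![(u : R), 0; 0, ((u⁻¹ : Rˣ) : R)], by simp [det_fin_two]⟩
  map_one' := by ext i j; fin_cases i <;> fin_cases j <;> simp
  map_mul' u v := by
    apply Subtype.ext
    change _ = !![(u : R), 0; 0, ((u⁻¹ : Rˣ) : R)] * !![(v : R), 0; 0, ((v⁻¹ : Rˣ) : R)]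
    rw [mul_fin_two]
    simp [mul_comm]

@[simp]
lemma coe_diagUnits (u : Rˣ) :
    (diagUnits u : Matrix (Fin 2) (Fin 2) R) = !![(u : R), 0; 0, ((u⁻¹ : Rˣ) : R)] := rfl

lemma diagUnits_injective : Function.Injective (diagUnits : Rˣ → SpecialLinearGroup (Fin 2) R) :=
  fun u v huv => Units.ext (by simpa using congr_fun₂ (congr_arg Subtype.val huv) 0 0)

def weyl : SpecialLinearGroup (Fin 2) R := ⟨!![0, 1; -1, 0], by simp [det_fin_two]⟩

@[simp]
lemma coe_weyl :
    ((weyl : SpecialLinearGroup (Fin 2) R) : Matrix (Fin 2) (Fin 2) R) = !![0, 1; -1, 0] :=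
  rfl

lemma weyl_mul_weyl : (weyl : SpecialLinearGroup (Fin 2) R) * weyl = diagUnits (-1) := by
  ext i j
  fin_cases i <;> fin_cases j <;> simp

lemma diagUnits_mul_weyl (u : Rˣ) : diagUnits u * weyl = weyl * (diagUnits u)⁻¹ := by
  rw [← map_inv]
  ext i j
  fin_cases i <;> fin_cases j <;> simp

lemma weyl_not_mem_range_diagUnits [Nontrivial R] :
    (weyl : SpecialLinearGroup (Fin 2) R) ∉ (diagUnits : Rˣ →* _).range := by
  rintro ⟨u, hu⟩
  simpa using congr_fun₂ (congr_arg Subtype.val hu) 0 1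

end FinTwo

variable {n : Type*} [Fintype n] [DecidableEq n] {R : Type*} [CommRing R]

lemma card_mul_card_units [Nonempty n] :
    Nat.card (SpecialLinearGroup n R) * Nat.card Rˣ = Nat.card (GL n R) := by
  rw [← Subgroup.card_mul_index (GeneralLinearGroup.det : GL n R →* Rˣ).ker,
    Subgroup.index_ker,
    MonoidHom.range_eq_top.mpr GeneralLinearGroup.det_surjective, Subgroup.card_top,
    ← Nat.card_range_of_injective toGL_injective, range_toGL, ← MonoidHom.coe_ker]
  rfl

lemma card_fin_two_field (F : Type*) [Field F] [Fintype F] :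
    Nat.card (SpecialLinearGroup (Fin 2) F) =
      Fintype.card F * (Fintype.card F - 1) * (Fintype.card F + 1) := by
  have hGL := card_mul_card_units (n := Fin 2) (R := F)
  rw [card_GL_field, Fin.prod_univ_two, Nat.card_units, Nat.card_eq_fintype_card (α := F)] at hGL
  simp only [Fin.val_zero, Fin.val_one, pow_zero, pow_one] at hGL
  set q := Fintype.card F
  have hq : 1 < q := Fintype.one_lt_card
  apply Nat.eq_of_mul_eq_mul_right (Nat.sub_pos_of_lt hq)
  rw [hGL]
  zify [hq.le, Nat.one_le_pow 2 q (by omega), Nat.le_self_pow two_ne_zero q]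
  ring

end Matrix.SpecialLinearGroup

theorem sylow_two_SL2_quaternion_general
    (p k N : ℕ) (hp4 : p % 4 = 1)
    (F : Type) [Field F] [Fintype F] (hq : Fintype.card F = p ^ k)
    (hN : N = (Fintype.card F - 1).factorization 2 + 1)
    (α : Fˣ) (hα : orderOf α = 2 ^ (N - 1))
    (c h : Matrix.SpecialLinearGroup (Fin 2) F)
    (hc : (c : Matrix (Fin 2) (Fin 2) F) = !![(α : F), 0; 0, ((α⁻¹ : Fˣ) : F)])
    (hh : (h : Matrix (Fin 2) (Fin 2) F) = !![0, 1; -1, 0]) :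
    (∃ S : Sylow 2 (Matrix.SpecialLinearGroup (Fin 2) F),
        (S : Subgroup _) = Subgroup.closure {c, h}) ∧
      Nonempty (↥(Subgroup.closure {c, h}) ≃* QuaternionGroup (2 ^ (N - 2))) := by
  have hc' : c = SpecialLinearGroup.diagUnits α := Subtype.ext hc
  have hh' : h = SpecialLinearGroup.weyl := Subtype.ext hh
  have hq4 : Fintype.card F % 4 = 1 := by simp [hq, Nat.pow_mod, hp4]
  have hq1 : 1 < Fintype.card F := Fintype.one_lt_card
  have hN3 : 3 ≤ N := by
    have := (Nat.prime_two.pow_dvd_iff_le_factorization (by omega)).mp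
      (show 2 ^ 2 ∣ Fintype.card F - 1 by omega)
    omega
  set m := N - 2
  replace hα : orderOf α = 2 ^ (m + 1) := by rw [hα, show N - 1 = m + 1 by omega]
  have horder : orderOf c = 2 * 2 ^ m := by
    rw [hc', orderOf_injective _ SpecialLinearGroup.diagUnits_injective, hα, pow_succ, mul_comm]
  have hsq : h * h = c ^ 2 ^ m := by
    rw [hc', hh', ← map_pow, Units.pow_two_pow_eq_neg_one hα, SpecialLinearGroup.weyl_mul_weyl]
  have hch : c * h = h * c⁻¹ := hc' ▸ hh' ▸ SpecialLinearGroup.diagUnits_mul_weyl α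
  have hh_not_mem : h ∉ Subgroup.zpowers c := fun hmem =>
    SpecialLinearGroup.weyl_not_mem_range_diagUnits <| hh' ▸
      Subgroup.zpowers_le.mpr (MonoidHom.mem_range.mpr ⟨α, hc'.symm⟩) hmem
  let e :=
    QuaternionGroup.closureEquiv (horder ▸ pow_orderOf_eq_one c) hsq hch horder hh_not_mem
  have hcard : Nat.card (Subgroup.closure {c, h}) =
      2 ^ (Nat.card (SpecialLinearGroup (Fin 2) F)).factorization 2 := by
    rw [Nat.card_congr e.toEquiv, Nat.card_eq_fintype_card, QuaternionGroup.card,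
      SpecialLinearGroup.card_fin_two_field, Nat.factorization_mul_pred_mul_succ_two hq4 hq1,
      ← hN, show N = m + 2 by omega]
    ring
  exact ⟨⟨Sylow.ofCard _ hcard, rfl⟩, ⟨e⟩⟩

/-- Let `p ≡ 1 (mod 4)` be prime, `q = p^k`, and `N = ord₂(q−1) + 1`.  If `α ∈ F_q^×` has
exact order `2^(N−1)`, `c = diag(α, α⁻¹)` and `h = [[0,1],[−1,0]]` in `SL₂(F_q)`, then
`S = ⟨c, h⟩` is a Sylow 2-subgroup of `SL₂(F_q)` and is isomorphic to the generalized
quaternion group `Q_{2^N}` (i.e. the dicyclic group of order `4·2^(N−2)`). -/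
theorem sylow_two_SL2_quaternion
    (p k N : ℕ) (hp : p.Prime) (hp4 : p % 4 = 1) (hk : 0 < k)
    (F : Type) [Field F] [Fintype F] (hq : Fintype.card F = p ^ k)
    (hN : N = (Fintype.card F - 1).factorization 2 + 1)
    (α : Fˣ) (hα : orderOf α = 2 ^ (N - 1))
    (c h : Matrix.SpecialLinearGroup (Fin 2) F)
    (hc : (c : Matrix (Fin 2) (Fin 2) F) = !![(α : F), 0; 0, ((α⁻¹ : Fˣ) : F)])
    (hh : (h : Matrix (Fin 2) (Fin 2) F) = !![0, 1; -1, 0]) :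
    (∃ S : Sylow 2 (Matrix.SpecialLinearGroup (Fin 2) F),
        (S : Subgroup _) = Subgroup.closure {c, h}) ∧
      Nonempty (↥(Subgroup.closure {c, h}) ≃* QuaternionGroup (2 ^ (N - 2))) :=
  sylow_two_SL2_quaternion_general p k N hp4 F hq hN α hα c h hc hh
end
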